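/- For u ∈ C^4 near z_0 on the regular-pattern uniform mesh, composing the gradient recovery stencil with itself in the x-direction yields H_h^{xx} u(z_0) = (1/(36h^2))·Σ_{j,k} c_j c_k u(z_0 + h(d_j + d_k)) where c = (2,1,-1,-2,-1,1) and d_j as in the regular-pattern stencil, and this satisfies H_h^{xx} u(z_0) = u_{xx}(z_0) + O(h^2). -/

import Mathlib

/-!
Expand `u` to third order at `z₀`; by the integral form of Taylor's theorem the remainder is
`O(‖y‖⁴)`. The composed stencil is `∑ⱼ ∑ₖ cⱼ cₖ g(dⱼ + dₖ)`. It annihilates constants since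
`∑ c = 0`, and every odd homogeneous polynomial since `(c, d)` changes sign under `j ↦ j + 3`. On a
quadratic form `B` it returns `2 B(s, s)` with `s = ∑ cⱼ dⱼ = 6 d₁`, so the Taylor polynomial with
step `h` contributes exactly `36 h² u_xx`. The remainder contributes `O(h⁴)`, which becomes `O(h²)`
after division by `36 h²`.
-/

open Finset Filter Topology Asymptotics Nat

section Stencil

variable {ι E F : Type*} [Fintype ι] [AddCommGroup E] [AddCommGroup F] [Module ℝ F]

/-- The difference stencil `g ↦ ∑ j, w j • g (· + d j)` composed with itself, at the origin. -/
def stencilSq (w : ι → ℝ) (d : ι → E) (g : E → F) : F := ∑ j, ∑ k, (w j * w k) • g (d j + d k)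

variable (w : ι → ℝ) (d : ι → E)

theorem stencilSq_sub (g₁ g₂ : E → F) :
    stencilSq w d (fun x => g₁ x - g₂ x) = stencilSq w d g₁ - stencilSq w d g₂ := by
  simp only [stencilSq, smul_sub, sum_sub_distrib]

theorem stencilSq_smul (c : ℝ) (g : E → F) :
    stencilSq w d (fun x => c • g x) = c • stencilSq w d g := by
  simp only [stencilSq, smul_sum, smul_comm c]

theorem stencilSq_sum {κ : Type*} (s : Finset κ) (g : κ → E → F) :
    stencilSq w d (fun x => ∑ i ∈ s, g i x) = ∑ i ∈ s, stencilSq w d (g i) := by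
  simp only [stencilSq, smul_sum]
  calc _ = ∑ j, ∑ i ∈ s, ∑ k, (w j * w k) • g i (d j + d k) := sum_congr rfl fun _ _ => sum_comm
    _ = _ := sum_comm

variable {w d}

theorem stencilSq_const (hw : ∑ j, w j = 0) (x : F) : stencilSq w d (fun _ => x) = 0 := by
  simp only [stencilSq, ← sum_smul, ← mul_sum, hw, mul_zero, zero_smul, sum_const_zero]

theorem stencilSq_of_odd (σ : ι ≃ ι) (hw : ∀ j, w (σ j) = -w j) (hd : ∀ j, d (σ j) = -d j)
    {g : E → F} (hg : ∀ x, g (-x) = -g x) : stencilSq w d g = 0 := by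
  have h : stencilSq w d g = -stencilSq w d g :=
    calc stencilSq w d g = ∑ j, ∑ k, (w (σ j) * w (σ k)) • g (d (σ j) + d (σ k)) := by
          rw [stencilSq, ← σ.sum_comp]
          exact sum_congr rfl fun j _ => (σ.sum_comp _).symm
      _ = -stencilSq w d g := by
          simp only [stencilSq, hw, hd, neg_mul_neg, ← neg_add, hg, smul_neg, sum_neg_distrib]
  have h2 : (2 : ℝ) • stencilSq w d g = 0 := by
    rw [two_smul]; nth_rewrite 1 [h]; exact neg_add_cancel _
  exact (smul_eq_zero.mp h2).resolve_left two_ne_zero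

end Stencil

section RegularPattern

variable {E : Type*} [AddCommGroup E]

def pprWeights : Fin 6 → ℝ := ![2, 1, -1, -2, -1, 1]

def pprDirections (a b : E) : Fin 6 → E := ![a, a + b, b, -a, -(a + b), -b]

theorem sum_pprWeights : ∑ j, pprWeights j = 0 := by
  simp [pprWeights, Fin.sum_univ_six]

theorem sum_pprWeights_smul_pprDirections [Module ℝ E] (a b : E) :
    ∑ j, pprWeights j • pprDirections a b j = (6 : ℝ) • a := by
  simp [pprWeights, pprDirections, Fin.sum_univ_six]; module

theorem pprWeights_add_three (j : Fin 6) : pprWeights (j + 3) = -pprWeights j := by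
  fin_cases j <;> simp [pprWeights]

theorem pprDirections_add_three (a b : E) (j : Fin 6) :
    pprDirections a b (j + 3) = -pprDirections a b j := by
  fin_cases j <;> simp [pprDirections]

end RegularPattern

section Normed

variable {ι E F : Type*} [Fintype ι] [NormedAddCommGroup E] [NormedSpace ℝ E]
  [NormedAddCommGroup F] [NormedSpace ℝ F]

theorem stencilSq_bilinear {w : ι → ℝ} (hw : ∑ j, w j = 0) (d : ι → E) (B : E →L[ℝ] E →L[ℝ] F) :
    stencilSq w d (fun x => B x x) = (2 : ℝ) • B (∑ j, w j • d j) (∑ j, w j • d j) := by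
  have hdiag (x : ι → F) : ∑ j, ∑ k, (w j * w k) • x j = 0 := by
    simp only [← sum_smul, ← mul_sum, hw, mul_zero, zero_smul, sum_const_zero]
  have hdiag' (x : ι → F) : ∑ j, ∑ k, (w j * w k) • x k = 0 := by
    rw [sum_comm]; simpa only [mul_comm] using hdiag x
  have hswap : ∑ j, ∑ k, (w j * w k) • B (d k) (d j) = ∑ j, ∑ k, (w j * w k) • B (d j) (d k) := by
    rw [sum_comm]; simp only [mul_comm]
  have hcross : B (∑ j, w j • d j) (∑ j, w j • d j) = ∑ j, ∑ k, (w j * w k) • B (d j) (d k) := by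
    simp only [map_sum, map_smul, _root_.sum_apply, smul_apply, smul_sum, smul_smul]
    exact hswap
  simp only [stencilSq, map_add, add_apply, smul_add, sum_add_distrib, hdiag, hdiag', hswap,
    zero_add, add_zero, two_smul, hcross]

theorem stencilSq_comp_smul_isBigO (w : ι → ℝ) (d : ι → E) {R : E → F} {n : ℕ}
    (hR : R =O[𝓝 0] fun y => ‖y‖ ^ n) :
    (fun h : ℝ => stencilSq w d (fun p => R (h • p))) =O[𝓝 0] fun h => h ^ n := by
  have hterm (p : E) : (fun h : ℝ => R (h • p)) =O[𝓝 0] fun h => h ^ n := by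
    have hlim : Tendsto (fun h : ℝ => h • p) (𝓝 0) (𝓝 0) := by
      simpa using (tendsto_id (x := 𝓝 (0 : ℝ))).smul_const p
    refine (hR.comp_tendsto hlim).trans (IsBigO.of_bound (‖p‖ ^ n) ?_)
    filter_upwards with h
    simp [norm_smul, mul_pow, mul_comm]
  exact IsBigO.fun_sum fun j _ => IsBigO.fun_sum fun k _ => (hterm _).const_smul_left (w j * w k)

theorem ContinuousMultilinearMap.map_smul_diag {k : ℕ}
    (m : ContinuousMultilinearMap ℝ (fun _ : Fin k => E) F) (c : ℝ) (v : E) :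
    m (fun _ => c • v) = c ^ k • m (fun _ => v) := by
  simpa using m.map_smul_univ (fun _ => c) (fun _ => v)

theorem ContinuousMultilinearMap.map_neg_diag_of_odd {k : ℕ} (hk : Odd k)
    (m : ContinuousMultilinearMap ℝ (fun _ : Fin k => E) F) (v : E) :
    m (fun _ => -v) = -m (fun _ => v) := by
  rw [← neg_one_smul ℝ v, m.map_smul_diag, hk.neg_one_pow, neg_one_smul]

theorem stencilSq_ppr_taylor (u : E → F) (z a b : E) (h : ℝ) :
    stencilSq pprWeights (pprDirections a b)
        (fun p => ∑ k ∈ range 4, (k ! : ℝ)⁻¹ • iteratedFDeriv ℝ k u z (fun _ => h • p))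
      = (36 * h ^ 2) • iteratedFDeriv ℝ 2 u z ![a, a] := by
  have hodd {k : ℕ} (hk : Odd k) : stencilSq pprWeights (pprDirections a b)
      (fun p => (k ! : ℝ)⁻¹ • iteratedFDeriv ℝ k u z (fun _ => h • p)) = 0 :=
    stencilSq_of_odd (Equiv.addRight 3) pprWeights_add_three (pprDirections_add_three a b)
      fun x => by rw [smul_neg, ContinuousMultilinearMap.map_neg_diag_of_odd hk, smul_neg]
  rw [stencilSq_sum, sum_range_succ, sum_range_succ, sum_range_succ, sum_range_one,
    hodd (k := 1) (by decide), hodd (k := 3) (by decide)]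
  simp only [iteratedFDeriv_zero_apply, stencilSq_const sum_pprWeights, iteratedFDeriv_two_apply,
    map_smul, smul_apply, smul_smul, stencilSq_smul, stencilSq_bilinear sum_pprWeights,
    sum_pprWeights_smul_pprDirections, Matrix.cons_val_zero, Matrix.cons_val_one,
    zero_add, add_zero]
  congr 1
  norm_num [Nat.factorial]
  ring

theorem taylor_remainder_isBigO [CompleteSpace F] {n : ℕ} {u : E → F}
    (hu : ContDiff ℝ (n + 1) u) (z : E) :
    (fun y => u (z + y) - ∑ k ∈ range (n + 1), (k ! : ℝ)⁻¹ • iteratedFDeriv ℝ k u z (fun _ => y))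
      =O[𝓝 0] fun y => ‖y‖ ^ (n + 1) := by
  set D := iteratedFDeriv ℝ (n + 1) u
  obtain ⟨δ, hδ, hDbdd⟩ : ∃ δ > 0, ∀ w, dist w z < δ → ‖D w‖ < ‖D z‖ + 1 :=
    Metric.eventually_nhds_iff.mp <| (hu.continuous_iteratedFDeriv le_rfl).norm.continuousAt
      |>.eventually_lt continuousAt_const (lt_add_one _)
  refine IsBigO.of_bound (‖D z‖ + 1) ?_
  filter_upwards [Metric.ball_mem_nhds 0 hδ] with y hy
  have hintegrand : ∀ t ∈ Set.uIoc (0 : ℝ) 1,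
      ‖(1 - t) ^ n • D (z + t • y) (fun _ => y)‖ ≤ (‖D z‖ + 1) * ‖y‖ ^ (n + 1) := by
    intro t ht
    obtain ⟨ht₀, ht₁⟩ : t ∈ Set.Ioc 0 1 := Set.uIoc_of_le (zero_le_one (α := ℝ)) ▸ ht
    have hzt : dist (z + t • y) z < δ := by
      rw [dist_eq_norm, add_sub_cancel_left, norm_smul, Real.norm_of_nonneg ht₀.le]
      exact (mul_le_of_le_one_left (norm_nonneg y) ht₁).trans_lt (mem_ball_zero_iff.mp hy)
    calc ‖(1 - t) ^ n • D (z + t • y) (fun _ => y)‖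
        ≤ ‖D (z + t • y)‖ * ∏ _ : Fin (n + 1), ‖y‖ := by
          rw [norm_smul, norm_pow, Real.norm_of_nonneg (by linarith)]
          exact (mul_le_of_le_one_left (norm_nonneg _) (pow_le_one₀ (by linarith) (by linarith))).trans
            ((D _).le_opNorm _)
      _ ≤ (‖D z‖ + 1) * ‖y‖ ^ (n + 1) := by
          rw [prod_const, Finset.card_univ, Fintype.card_fin]
          gcongr
          exact (hDbdd _ hzt).le
  rw [map_add_eq_sum_add_integral_iteratedFDeriv fun t _ => hu.contDiffAt, add_sub_cancel_left,
    norm_smul, norm_pow, norm_norm]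
  calc ‖((n ! : ℝ))⁻¹‖ * ‖∫ t in (0 : ℝ)..1, (1 - t) ^ n • D (z + t • y) (fun _ => y)‖
      ≤ 1 * ((‖D z‖ + 1) * ‖y‖ ^ (n + 1) * |1 - 0|) := by
        gcongr
        · rw [norm_inv, Real.norm_natCast]
          exact inv_le_one_of_one_le₀ (mod_cast n.factorial_pos)
        · exact intervalIntegral.norm_integral_le_of_norm_le_const hintegrand
    _ = (‖D z‖ + 1) * ‖y‖ ^ (n + 1) := by norm_num

noncomputable def pprHessianStencil (a b : E) (u : E → F) (z : E) (h : ℝ) : F :=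
  (1 / (36 * h ^ 2)) • stencilSq pprWeights (pprDirections a b) (fun p => u (z + h • p))

theorem pprHessianStencil_sub_isBigO [CompleteSpace F] {u : E → F} (hu : ContDiff ℝ 4 u)
    (z a b : E) :
    (fun h => pprHessianStencil a b u z h - iteratedFDeriv ℝ 2 u z ![a, a])
      =O[𝓝[≠] 0] fun h => h ^ 2 := by
  set R := fun y => u (z + y) - ∑ k ∈ range 4, (k ! : ℝ)⁻¹ • iteratedFDeriv ℝ k u z (fun _ => y)
  have hR : R =O[𝓝 0] fun y => ‖y‖ ^ 4 := taylor_remainder_isBigO (n := 3) hu z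
  have hstencil := (stencilSq_comp_smul_isBigO pprWeights (pprDirections a b) hR).mono
    (nhdsWithin_le_nhds (s := {0}ᶜ))
  have herror : (fun h => pprHessianStencil a b u z h - iteratedFDeriv ℝ 2 u z ![a, a])
      =ᶠ[𝓝[≠] 0] fun h => (1 / (36 * h ^ 2)) •
        stencilSq pprWeights (pprDirections a b) (fun p => R (h • p)) := by
    filter_upwards [self_mem_nhdsWithin] with h (hh : h ≠ 0)
    rw [stencilSq_sub, stencilSq_ppr_taylor, pprHessianStencil, smul_sub, smul_smul,
      one_div_mul_cancel (by positivity), one_smul]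
  have hscale : (fun h : ℝ => (1 / (36 * h ^ 2)) * h ^ 4) =O[𝓝[≠] 0] fun h => h ^ 2 := by
    refine IsBigO.of_bound 1 ?_
    filter_upwards [self_mem_nhdsWithin] with h (hh : h ≠ 0)
    rw [show 1 / (36 * h ^ 2) * h ^ 4 = 36⁻¹ * h ^ 2 by field_simp, norm_mul]
    exact mul_le_mul_of_nonneg_right (by norm_num) (norm_nonneg _)
  exact (((isBigO_refl _ _).smul hstencil).trans hscale).congr' herror.symm EventuallyEq.rfl

end Normed

theorem exists_bound_of_isBigO_nhdsNE {F : Type*} [Norm F] {f : ℝ → F} {g : ℝ → ℝ}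
    (hf : f =O[𝓝[≠] 0] g) : ∃ C > 0, ∃ h₀ > 0, ∀ h : ℝ, 0 < h → h ≤ h₀ → ‖f h‖ ≤ C * ‖g h‖ := by
  obtain ⟨C, hC, hfC⟩ := hf.exists_pos
  obtain ⟨ε, hε, hball⟩ := Metric.eventually_nhds_iff.mp (eventually_nhdsWithin_iff.mp hfC.bound)
  refine ⟨C, hC, ε / 2, half_pos hε, fun h hh hle => hball ?_ hh.ne'⟩
  rw [Real.dist_0_eq_abs, abs_of_pos hh]
  linarith

/-- Composing the regular-pattern PPR gradient stencil with itself in the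
x-direction gives a second-order consistent approximation of `u_xx`. -/
theorem stmt8 (u : ℝ × ℝ → ℝ) (z₀ : ℝ × ℝ) (hu : ContDiff ℝ 4 u)
    (d : Fin 6 → ℝ × ℝ)
    (hd : d = ![(1, 0), (1, 1), (0, 1), (-1, 0), (-1, -1), (0, -1)])
    (c : Fin 6 → ℝ) (hc : c = ![2, 1, -1, -2, -1, 1]) :
    ∃ C > 0, ∃ h₀ > 0, ∀ h : ℝ, 0 < h → h ≤ h₀ →
      |(1 / (36 * h ^ 2)) * ∑ j : Fin 6, ∑ k : Fin 6,
          c j * c k * u (z₀ + h • (d j + d k))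
        - iteratedFDeriv ℝ 2 u z₀ ![((1 : ℝ), (0 : ℝ)), (1, 0)]| ≤ C * h ^ 2 := by
  have hd' : d = pprDirections (1, 0) (0, 1) := by
    subst hd; ext j <;> fin_cases j <;> simp [pprDirections]
  subst hd' hc
  obtain ⟨C, hC, h₀, hh₀, hbound⟩ :=
    exists_bound_of_isBigO_nhdsNE (pprHessianStencil_sub_isBigO hu z₀ (1, 0) (0, 1))
  refine ⟨C, hC, h₀, hh₀, fun h hh hle => ?_⟩
  simpa [pprHessianStencil, stencilSq, pprWeights] using hbound h hh hle
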